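/- arXiv:2404.07945 — 2 statements merged into one kernel-verified Lean document; each statement's English description precedes it below -/
import Mathlib

section
/- Let (Ω, 𝓕, (𝓕_t)_{t∈[0,1]}, P) be a filtered probability space, ν a Borel probability measure on 𝕏, and X : [0,1]×Ω → 𝕏 a jointly measurable, (𝓕_t)-adapted process such that X_t has law ν for every t ∈ [0,1]. For 1 ≤ i ≤ d2 let Φ_i, and for 1 ≤ i ≤ d3 let Γ_i, be random measures, i.e. measurable maps from Ω to the finite Borel measures on 𝕏×𝔽×[0,1] (respectively on 𝕏×𝔾×[0,1]), with E[Φ_i(𝕏×𝔽×[0,1])] < ∞ and E[Γ_i(𝕏×𝔾×[0,1])] < ∞. Define finite Borel measures λ_i on 𝕏×𝔽 and μ_i on 𝕏×𝔾 by λ_i(C) = E[Φ_i(C×(0,1])] and μ_i(C) = E[Γ_i(C×(0,1])]. Assume that for every h ∈ C²_b(𝕏) the function ℬ^F_i h is λ_i-integrable and ℬ^G_i h is μ_i-integrable for each i, and that the process M^h_t = h(X_t) − ∫₀ᵗ (𝒜h)(X_s) ds − Σ_{i=1}^{d2} ∫_{𝕏×𝔽×(0,t]} (ℬ^F_i h)(x,z)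 Φ_i(dx,dz,ds) − Σ_{i=1}^{d3} ∫_{𝕏×𝔾×(0,t]} (ℬ^G_i h)(x,y) Γ_i(dx,dy,ds), t ∈ [0,1], is an (𝓕_t)-martingale. Then for every h ∈ C²_b(𝕏): ∫𝒜h dν + Σ_{i=1}^{d2} ∫ℬ^F_i h dλ_i + Σ_{i=1}^{d3} ∫ℬ^G_i h dμ_i = 0. -/
open MeasureTheory Filter Topology Set
open scoped NNReal ENNReal

noncomputable section

/-- `ℝ^d` with the Euclidean norm; the state space `𝕏`. -/
abbrev Euc (d : ℕ) := EuclideanSpace ℝ (Fin d)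

/-- The cone `[0,∞)^m` of possible increments of the singular components. -/
abbrev Cone (m : ℕ) := Fin m → ℝ≥0

/-- i-th standard basis vector. -/
def esingle {d : ℕ} (i : Fin d) : Euc d := EuclideanSpace.single i (1 : ℝ)

/-- Partial derivative `∂h/∂x_i`. -/
def pd {d : ℕ} (h : Euc d → ℝ) (i : Fin d) (x : Euc d) : ℝ := fderiv ℝ h x (esingle i)

/-- Second partial derivative `∂²h/∂x_i∂x_j`. -/
def pd2 {d : ℕ} (h : Euc d → ℝ) (i j : Fin d) (x : Euc d) : ℝ :=
  fderiv ℝ (fun y => pd h j y) x (esingle i)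

/-- Test functions `C²_b(𝕏)`: twice continuously differentiable with gradient vanishing
outside a compact set. -/
def TestFun {d : ℕ} (h : Euc d → ℝ) : Prop :=
  ContDiff ℝ 2 h ∧ ∃ K : Set (Euc d), IsCompact K ∧ ∀ x ∉ K, fderiv ℝ h x = 0

/-- Build a Euclidean vector from its coordinates. -/
def vecOf {d : ℕ} (v : Fin d → ℝ) : Euc d := (EuclideanSpace.equiv (Fin d) ℝ).symm v

variable {d d1 d2 d3 : ℕ}

/-- The second-order generator
`(𝒜h)(x) = (1/2)Σ_{ij} a_{ij}(x) ∂²h/∂x_i∂x_j + Σ_i β_i(x) ∂h/∂x_i`, where `a = σσᵀ`. -/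
def genA (β : Euc d → Euc d) (σ : Euc d → Fin d → Fin d1 → ℝ)
    (h : Euc d → ℝ) (x : Euc d) : ℝ :=
  (1/2) * ∑ i, ∑ j, (∑ k, σ x i k * σ x j k) * pd2 h i j x + ∑ i, β x i * pd h i x

/-- The intrinsic singular operator:
`(ℬ^F_i h)(x,z) = (h(x + φ(x)z) − h(x))/z_i` if `z_i > 0`, and
`(ℬ^F_i h)(x,z) = (φ(x)e_i)·∇h(x)` if `z_i = 0`. -/
def genBFv (φ : Euc d → Fin d → Fin d2 → ℝ) (h : Euc d → ℝ) (i : Fin d2)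
    (x : Euc d) (z : Cone d2) : ℝ :=
  if 0 < z i then
    (h (x + vecOf (fun j => ∑ k, φ x j k * (z k : ℝ))) - h x) / (z i : ℝ)
  else ∑ j, φ x j i * pd h j x

/-- The control operator:
`(ℬ^G_i h)(x,y) = (h(x − γ(x)y) − h(x))/y_i` if `y_i > 0`, and
`(ℬ^G_i h)(x,y) = −(γ(x)e_i)·∇h(x)` if `y_i = 0`. -/
def genBGv (γ : Euc d → Fin d → Fin d3 → ℝ) (h : Euc d → ℝ) (i : Fin d3)
    (x : Euc d) (y : Cone d3) : ℝ :=
  if 0 < y i then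
    (h (x - vecOf (fun j => ∑ k, γ x j k * (y k : ℝ))) - h x) / (y i : ℝ)
  else - ∑ j, γ x j i * pd h j x

/-- The process
`M^h_t = h(X_t) − ∫₀ᵗ(𝒜h)(X_s)ds − Σ_i ∫_{𝕏×𝔽×(0,t]}(ℬ^F_i h)dΦ_i − Σ_i ∫_{𝕏×𝔾×(0,t]}(ℬ^G_i h)dΓ_i`. -/
def Mproc {Ω : Type*} (β : Euc d → Euc d) (σ : Euc d → Fin d → Fin d1 → ℝ)
    (φ : Euc d → Fin d → Fin d2 → ℝ) (γ : Euc d → Fin d → Fin d3 → ℝ)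
    (h : Euc d → ℝ) (X : ℝ → Ω → Euc d)
    (Φ : Fin d2 → Ω → Measure ((Euc d × Cone d2) × ℝ))
    (Γ : Fin d3 → Ω → Measure ((Euc d × Cone d3) × ℝ))
    (t : ℝ) (ω : Ω) : ℝ :=
  h (X t ω) - (∫ s in Ioc (0:ℝ) t, genA β σ h (X s ω))
    - ∑ i, ∫ q in (univ : Set (Euc d × Cone d2)) ×ˢ Ioc (0:ℝ) t,
        genBFv φ h i q.1.1 q.1.2 ∂(Φ i ω)
    - ∑ i, ∫ q in (univ : Set (Euc d × Cone d3)) ×ˢ Ioc (0:ℝ) t,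
        genBGv γ h i q.1.1 q.1.2 ∂(Γ i ω)

/-- `M` is an `(ℱ_t)_{t∈[0,1]}`-martingale: it is adapted, integrable, and satisfies the
defining set-integral identity of the martingale property on `[0,1]`. -/
def IsMartingaleOn {Ω : Type*} {mΩ : MeasurableSpace Ω} (ℱ : Filtration ℝ mΩ)
    (P : Measure Ω) (M : ℝ → Ω → ℝ) : Prop :=
  (∀ t ∈ Icc (0:ℝ) 1, StronglyMeasurable[ℱ t] (M t)) ∧
  (∀ t ∈ Icc (0:ℝ) 1, Integrable (M t) P) ∧
  ∀ s t : ℝ, 0 ≤ s → s ≤ t → t ≤ 1 →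
    ∀ A : Set Ω, MeasurableSet[ℱ s] A → ∫ ω in A, M t ω ∂P = ∫ ω in A, M s ω ∂P

/-- A random measure `Ξ` on `S×[0,1]` has time-stationary increments: the joint law of
`(Ξ(C_k×(a_k+t, b_k+t]))_k` does not depend on `t`. -/
def StationaryIncrements {Ω S : Type*} {mΩ : MeasurableSpace Ω} [MeasurableSpace S]
    (P : Measure Ω) (Ξ : Ω → Measure (S × ℝ)) : Prop :=
  ∀ (n : ℕ) (C : Fin n → Set S), (∀ k, MeasurableSet (C k)) →
    ∀ (a b : Fin n → ℝ) (t : ℝ), 0 ≤ t →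
      (∀ k, 0 ≤ a k ∧ a k ≤ b k ∧ b k + t ≤ 1) →
      Measure.map (fun ω => fun k => Ξ ω ((C k) ×ˢ Ioc (a k + t) (b k + t))) P =
        Measure.map (fun ω => fun k => Ξ ω ((C k) ×ˢ Ioc (a k) (b k))) P

/-!
Take expectations in the martingale identity `E[M^h_1] = E[M^h_0]`. Since `X_0` and `X_1` both
have law `ν`, the terms `E[h(X_1)]` and `E[h(X_0)]` cancel. By Fubini and stationarity,
`E ∫₀¹ 𝒜h(X_s) ds = ∫ 𝒜h dν`; this needs `𝒜h` bounded, which holds because the derivatives of `h`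
vanish off a compact set on which the locally bounded coefficients are bounded. Finally `λ_i`
and `μ_i` are the intensities of `Φ_i` and `Γ_i` over `(0,1]`, so the expected integrals
against `Φ_i`, `Γ_i` are the integrals against `λ_i`, `μ_i`.
-/

open ProbabilityTheory

section RandomMeasure

variable {Ω S T E : Type*} [MeasurableSpace Ω] [MeasurableSpace S] [MeasurableSpace T]
  [NormedAddCommGroup E] [NormedSpace ℝ E]

lemma integral_integral_of_integrable_bind {P : Measure Ω} {η : Ω → Measure S}
    (hη : Measurable η) {f : S → E} (hf : Integrable f (P.bind η)) :
    Integrable (fun ω => ∫ x, f x ∂η ω) P ∧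
      ∫ ω, ∫ x, f x ∂η ω ∂P = ∫ x, f x ∂P.bind η := by
  let κ : Kernel Ω S := ⟨η, hη⟩
  have hbind : P.bind η = (κ ∘ₖ Kernel.const Unit P) () := by
    rw [Kernel.comp_apply, Kernel.const_apply]; rfl
  rw [hbind] at hf ⊢
  exact ⟨hf.integral_comp, (Kernel.integral_comp hf).symm⟩

def marginalOn (ρ : Measure (S × T)) (s : Set T) : Measure S :=
  (ρ.restrict (univ ×ˢ s)).map Prod.fst

lemma marginalOn_apply (ρ : Measure (S × T)) (s : Set T) {C : Set S}
    (hC : MeasurableSet C) : marginalOn ρ s C = ρ (C ×ˢ s) := by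
  rw [marginalOn, Measure.map_apply measurable_fst hC,
    Measure.restrict_apply (measurable_fst hC), ← prod_univ, prod_inter_prod, inter_univ,
    univ_inter]

lemma integral_marginalOn (ρ : Measure (S × T)) (s : Set T) {f : S → E}
    (hf : StronglyMeasurable f) :
    ∫ x, f x ∂marginalOn ρ s = ∫ q in univ ×ˢ s, f q.1 ∂ρ :=
  integral_map measurable_fst.aemeasurable hf.aestronglyMeasurable

lemma measurable_marginalOn {Ξ : Ω → Measure (S × T)}
    (hΞ : ∀ A, MeasurableSet A → Measurable fun ω => Ξ ω A) {s : Set T} (hs : MeasurableSet s) :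
    Measurable fun ω => marginalOn (Ξ ω) s :=
  Measure.measurable_of_measurable_coe _ fun C hC => by
    simp_rw [marginalOn_apply _ s hC]
    exact hΞ _ (hC.prod hs)

lemma integral_setIntegral_univ_prod_eq_integral {P : Measure Ω} {Ξ : Ω → Measure (S × T)}
    (hΞ : ∀ A, MeasurableSet A → Measurable fun ω => Ξ ω A) {s : Set T} (hs : MeasurableSet s)
    {lam : Measure S} (hlam : ∀ C, MeasurableSet C → lam C = ∫⁻ ω, Ξ ω (C ×ˢ s) ∂P)
    {f : S → E} (hfm : StronglyMeasurable f) (hf : Integrable f lam) :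
    Integrable (fun ω => ∫ q in univ ×ˢ s, f q.1 ∂Ξ ω) P ∧
      ∫ ω, ∫ q in univ ×ˢ s, f q.1 ∂Ξ ω ∂P = ∫ x, f x ∂lam := by
  have hbind : P.bind (fun ω => marginalOn (Ξ ω) s) = lam := by
    ext C hC
    rw [Measure.bind_apply hC (measurable_marginalOn hΞ hs).aemeasurable, hlam C hC]
    simp_rw [marginalOn_apply _ s hC]
  simp_rw [← integral_marginalOn _ _ hfm]
  rw [← hbind] at hf ⊢
  exact integral_integral_of_integrable_bind (measurable_marginalOn hΞ hs) hf

lemma integral_sum_setIntegral_univ_prod_eq_sum_integral {ι : Type*} [Fintype ι]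
    {P : Measure Ω} {Ξ : ι → Ω → Measure (S × T)}
    (hΞ : ∀ i A, MeasurableSet A → Measurable fun ω => Ξ i ω A) {s : Set T}
    (hs : MeasurableSet s) {lam : ι → Measure S}
    (hlam : ∀ i C, MeasurableSet C → lam i C = ∫⁻ ω, Ξ i ω (C ×ˢ s) ∂P)
    {f : ι → S → E} (hfm : ∀ i, StronglyMeasurable (f i)) (hf : ∀ i, Integrable (f i) (lam i)) :
    Integrable (fun ω => ∑ i, ∫ q in univ ×ˢ s, f i q.1 ∂Ξ i ω) P ∧
      ∫ ω, ∑ i, ∫ q in univ ×ˢ s, f i q.1 ∂Ξ i ω ∂P = ∑ i, ∫ x, f i x ∂lam i := by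
  have H i := integral_setIntegral_univ_prod_eq_integral (hΞ i) hs (hlam i) (hfm i) (hf i)
  refine ⟨integrable_finsetSum _ fun i _ => (H i).1, ?_⟩
  rw [integral_finsetSum _ fun i _ => (H i).1]
  exact Finset.sum_congr rfl fun i _ => (H i).2

end RandomMeasure

section StationaryProcess

variable {Ω S T E : Type*} [MeasurableSpace Ω] [MeasurableSpace S] [MeasurableSpace T]
  [NormedAddCommGroup E] [NormedSpace ℝ E]

lemma integral_integral_comp_eq_of_map_eq [CompleteSpace E] {P : Measure Ω} [IsFiniteMeasure P]
    {τ : Measure T} [IsFiniteMeasure τ] {X : T → Ω → S}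
    (hX : Measurable (Function.uncurry X)) {ν : Measure S} (hlaw : ∀ᵐ t ∂τ, P.map (X t) = ν)
    {g : S → E} (hgm : StronglyMeasurable g) {C : ℝ} (hgC : ∀ x, ‖g x‖ ≤ C) :
    Integrable (fun ω => ∫ t, g (X t ω) ∂τ) P ∧
      ∫ ω, ∫ t, g (X t ω) ∂τ ∂P = τ.real univ • ∫ x, g x ∂ν := by
  have hXt : ∀ t, Measurable (X t) := fun t => hX.comp measurable_prodMk_left
  have hint : Integrable (fun p : Ω × T => g (X p.2 p.1)) (P.prod τ) :=
    .of_bound (hgm.comp_measurable (hX.comp measurable_swap)).aestronglyMeasurable C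
      (ae_of_all _ fun p => hgC _)
  refine ⟨hint.integral_prod_left, ?_⟩
  rw [integral_integral_swap hint, ← integral_const]
  refine integral_congr_ae (hlaw.mono fun t ht => ?_)
  rw [← ht, integral_map (hXt t).aemeasurable hgm.aestronglyMeasurable]

end StationaryProcess

section Generators

variable {h : Euc d → ℝ}

lemma TestFun.continuous_pd (hh : TestFun h) (i : Fin d) : Continuous (pd h i) :=
  (hh.1.continuous_fderiv (by norm_num)).clm_apply continuous_const

lemma TestFun.contDiff_pd (hh : TestFun h) (i : Fin d) : ContDiff ℝ 1 (pd h i) :=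
  (hh.1.fderiv_right (m := 1) (by norm_num)).clm_apply contDiff_const

lemma TestFun.continuous_pd2 (hh : TestFun h) (i j : Fin d) : Continuous (pd2 h i j) :=
  ((hh.contDiff_pd j).continuous_fderiv one_ne_zero).clm_apply continuous_const

lemma pd_eq_zero_of_fderiv_eq_zero {x : Euc d} (hx : fderiv ℝ h x = 0) (i : Fin d) :
    pd h i x = 0 := by
  simp [pd, hx]

lemma pd2_eq_zero_of_eventually_fderiv_eq_zero {x : Euc d} (hx : ∀ᶠ y in 𝓝 x, fderiv ℝ h y = 0)
    (i j : Fin d) : pd2 h i j x = 0 := by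
  have hpd : (pd h j) =ᶠ[𝓝 x] fun _ => 0 := hx.mono fun y hy => pd_eq_zero_of_fderiv_eq_zero hy j
  simp [pd2, hpd.fderiv_eq]

lemma genA_eq_zero_of_eventually_fderiv_eq_zero (β : Euc d → Euc d)
    (σ : Euc d → Fin d → Fin d1 → ℝ) {x : Euc d} (hx : ∀ᶠ y in 𝓝 x, fderiv ℝ h y = 0) :
    genA β σ h x = 0 := by
  simp [genA, pd_eq_zero_of_fderiv_eq_zero hx.self_of_nhds,
    pd2_eq_zero_of_eventually_fderiv_eq_zero hx]

lemma TestFun.exists_bound_genA (hh : TestFun h) {β : Euc d → Euc d}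
    {σ : Euc d → Fin d → Fin d1 → ℝ}
    (hβ : ∀ x : Euc d, ∃ U ∈ 𝓝 x, ∃ C : ℝ, ∀ y ∈ U, ‖β y‖ ≤ C)
    (hσ : ∀ x : Euc d, ∃ U ∈ 𝓝 x, ∃ C : ℝ, ∀ y ∈ U, ∀ i k, |σ y i k| ≤ C) :
    ∃ C, ∀ x, ‖genA β σ h x‖ ≤ C := by
  have hpd := hh.continuous_pd
  have hpd2 := hh.continuous_pd2
  obtain ⟨-, K, hK, hK0⟩ := hh
  have hcoef : Bornology.IsBounded ((fun x => (β x, σ x)) '' K) := by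
    refine Bornology.isBounded_image_of_isLocallyBounded_of_isCompact hK fun x => ?_
    obtain ⟨U, hU, Cβ, hCβ⟩ := hβ x
    obtain ⟨V, hV, Cσ, hCσ⟩ := hσ x
    refine ⟨U ∩ V, inter_mem hU hV, isBounded_iff_forall_norm_le.2 ⟨max Cβ (max Cσ 0), ?_⟩⟩
    rintro _ ⟨y, hy, rfl⟩
    refine max_le_max (hCβ y hy.1) ?_
    refine pi_norm_le_iff_of_nonneg (le_max_right _ _) |>.2 fun i => ?_
    exact pi_norm_le_iff_of_nonneg (le_max_right _ _) |>.2 fun k =>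
      (Real.norm_eq_abs _ ▸ hCσ y hy.2 i k).trans (le_max_left _ _)
  -- `genA β σ h x` is a continuous function of `(x, β x, σ x)`
  let G : Euc d × Euc d × (Fin d → Fin d1 → ℝ) → ℝ :=
    fun p => genA (fun _ => p.2.1) (fun _ => p.2.2) h p.1
  have hG : Continuous G := by
    unfold G genA
    fun_prop
  obtain ⟨C, hC⟩ := (hK.prod hcoef.isCompact_closure).exists_bound_of_continuousOn hG.continuousOn
  refine ⟨max C 0, fun x => ?_⟩
  by_cases hx : x ∈ K
  · exact (hC (x, β x, σ x) ⟨hx, subset_closure ⟨x, hx, rfl⟩⟩).trans (le_max_left _ _)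
  · rw [genA_eq_zero_of_eventually_fderiv_eq_zero β σ
      (eventually_of_mem (hK.isClosed.isOpen_compl.mem_nhds hx) hK0)]
    simp

lemma TestFun.measurable_genA (hh : TestFun h) {β : Euc d → Euc d}
    {σ : Euc d → Fin d → Fin d1 → ℝ} (hβ : Measurable β) (hσ : Measurable σ) :
    Measurable (genA β σ h) := by
  have := hh.continuous_pd
  have := hh.continuous_pd2
  unfold genA
  fun_prop

lemma TestFun.measurable_genBFv (hh : TestFun h) {φ : Euc d → Fin d → Fin d2 → ℝ}
    (hφ : Measurable φ) (i : Fin d2) :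
    Measurable fun q : Euc d × Cone d2 => genBFv φ h i q.1 q.2 := by
  have := hh.continuous_pd
  have := hh.1.continuous
  unfold genBFv vecOf
  exact Measurable.ite (measurableSet_lt measurable_const (by fun_prop)) (by fun_prop)
    (by fun_prop)

lemma TestFun.measurable_genBGv (hh : TestFun h) {γ : Euc d → Fin d → Fin d3 → ℝ}
    (hγ : Measurable γ) (i : Fin d3) :
    Measurable fun q : Euc d × Cone d3 => genBGv γ h i q.1 q.2 := by
  have := hh.continuous_pd
  have := hh.1.continuous
  unfold genBGv vecOf
  exact Measurable.ite (measurableSet_lt measurable_const (by fun_prop)) (by fun_prop)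
    (by fun_prop)

lemma TestFun.integral_setIntegral_Ioc_genA {Ω : Type*} [MeasurableSpace Ω] {P : Measure Ω}
    [IsFiniteMeasure P] (hh : TestFun h) {β : Euc d → Euc d} {σ : Euc d → Fin d → Fin d1 → ℝ}
    (hβm : Measurable β) (hσm : Measurable σ)
    (hβ : ∀ x : Euc d, ∃ U ∈ 𝓝 x, ∃ C : ℝ, ∀ y ∈ U, ‖β y‖ ≤ C)
    (hσ : ∀ x : Euc d, ∃ U ∈ 𝓝 x, ∃ C : ℝ, ∀ y ∈ U, ∀ i k, |σ y i k| ≤ C)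
    {X : ℝ → Ω → Euc d} (hX : Measurable (Function.uncurry X)) {ν : Measure (Euc d)}
    (hlaw : ∀ t ∈ Ioc (0:ℝ) 1, P.map (X t) = ν) :
    Integrable (fun ω => ∫ s in Ioc (0:ℝ) 1, genA β σ h (X s ω)) P ∧
      ∫ ω, (∫ s in Ioc (0:ℝ) 1, genA β σ h (X s ω)) ∂P = ∫ x, genA β σ h x ∂ν := by
  obtain ⟨C, hC⟩ := hh.exists_bound_genA hβ hσ
  have H := integral_integral_comp_eq_of_map_eq (τ := volume.restrict (Ioc (0:ℝ) 1)) hX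
    ((ae_restrict_iff' measurableSet_Ioc).2 (ae_of_all _ hlaw))
    (hh.measurable_genA hβm hσm).stronglyMeasurable hC
  simpa using H

end Generators

section Mproc

variable {Ω : Type*} {β : Euc d → Euc d} {σ : Euc d → Fin d → Fin d1 → ℝ}
  {φ : Euc d → Fin d → Fin d2 → ℝ} {γ : Euc d → Fin d → Fin d3 → ℝ} {h : Euc d → ℝ}
  {X : ℝ → Ω → Euc d} {Φ : Fin d2 → Ω → Measure ((Euc d × Cone d2) × ℝ)}
  {Γ : Fin d3 → Ω → Measure ((Euc d × Cone d3) × ℝ)}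

lemma Mproc_zero (ω : Ω) : Mproc β σ φ γ h X Φ Γ 0 ω = h (X 0 ω) := by
  simp [Mproc]

lemma comp_eq_Mproc_add (t : ℝ) :
    (fun ω => h (X t ω)) = Mproc β σ φ γ h X Φ Γ t
      + (fun ω => ∫ s in Ioc (0:ℝ) t, genA β σ h (X s ω))
      + (fun ω => ∑ i, ∫ q in (univ : Set (Euc d × Cone d2)) ×ˢ Ioc (0:ℝ) t,
          genBFv φ h i q.1.1 q.1.2 ∂(Φ i ω))
      + (fun ω => ∑ i, ∫ q in (univ : Set (Euc d × Cone d3)) ×ˢ Ioc (0:ℝ) t,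
          genBGv γ h i q.1.1 q.1.2 ∂(Γ i ω)) := by
  ext ω
  simp only [Pi.add_apply, Mproc]
  ring

end Mproc

theorem stmt0_general {d d1 d2 d3 : ℕ} {Ω : Type*} {mΩ : MeasurableSpace Ω}
    (P : Measure Ω) (hP : IsProbabilityMeasure P) (ℱ : Filtration ℝ mΩ)
    (β : Euc d → Euc d) (σ : Euc d → Fin d → Fin d1 → ℝ)
    (φ : Euc d → Fin d → Fin d2 → ℝ) (γ : Euc d → Fin d → Fin d3 → ℝ)
    (hβm : Measurable β) (hσm : Measurable σ) (hφm : Measurable φ) (hγm : Measurable γ)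
    (hβloc : ∀ x : Euc d, ∃ U ∈ 𝓝 x, ∃ C : ℝ, ∀ y ∈ U, ‖β y‖ ≤ C)
    (hσloc : ∀ x : Euc d, ∃ U ∈ 𝓝 x, ∃ C : ℝ, ∀ y ∈ U, ∀ i k, |σ y i k| ≤ C)
    (ν : Measure (Euc d))
    (X : ℝ → Ω → Euc d)
    (hXjm : Measurable (Function.uncurry X))
    (hXlaw : ∀ t ∈ Icc (0:ℝ) 1, Measure.map (X t) P = ν)
    (Φ : Fin d2 → Ω → Measure ((Euc d × Cone d2) × ℝ))
    (Γ : Fin d3 → Ω → Measure ((Euc d × Cone d3) × ℝ))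
    (hΦm : ∀ i (A : Set ((Euc d × Cone d2) × ℝ)), MeasurableSet A →
      Measurable fun ω => Φ i ω A)
    (hΓm : ∀ i (A : Set ((Euc d × Cone d3) × ℝ)), MeasurableSet A →
      Measurable fun ω => Γ i ω A)
    (lam : Fin d2 → Measure (Euc d × Cone d2))
    (mu : Fin d3 → Measure (Euc d × Cone d3))
    (hlam : ∀ i (C : Set (Euc d × Cone d2)), MeasurableSet C →
      lam i C = ∫⁻ ω, Φ i ω (C ×ˢ Ioc (0:ℝ) 1) ∂P)
    (hmu : ∀ i (C : Set (Euc d × Cone d3)), MeasurableSet C →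
      mu i C = ∫⁻ ω, Γ i ω (C ×ˢ Ioc (0:ℝ) 1) ∂P)
    (hintF : ∀ h : Euc d → ℝ, TestFun h → ∀ i,
      Integrable (fun q : Euc d × Cone d2 => genBFv φ h i q.1 q.2) (lam i))
    (hintG : ∀ h : Euc d → ℝ, TestFun h → ∀ i,
      Integrable (fun q : Euc d × Cone d3 => genBGv γ h i q.1 q.2) (mu i))
    (hmart : ∀ h : Euc d → ℝ, TestFun h →
      IsMartingaleOn ℱ P (Mproc β σ φ γ h X Φ Γ)) :
    ∀ h : Euc d → ℝ, TestFun h →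
      ∫ x, genA β σ h x ∂ν
        + ∑ i, ∫ q, genBFv φ h i q.1 q.2 ∂(lam i)
        + ∑ i, ∫ q, genBGv γ h i q.1 q.2 ∂(mu i) = 0 := by
  intro h hh
  obtain ⟨-, hint, hmg⟩ := hmart h hh
  have hmean_h : ∀ t ∈ Icc (0:ℝ) 1, ∫ ω, h (X t ω) ∂P = ∫ x, h x ∂ν := fun t ht => by
    have hXt : Measurable (X t) := hXjm.comp measurable_prodMk_left
    rw [← hXlaw t ht, integral_map hXt.aemeasurable hh.1.continuous.aestronglyMeasurable]
  have hM : ∫ ω, Mproc β σ φ γ h X Φ Γ 1 ω ∂P = ∫ x, h x ∂ν := by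
    simpa [Mproc_zero, hmean_h 0 (by norm_num)] using hmg 0 1 le_rfl zero_le_one le_rfl univ .univ
  have hA := hh.integral_setIntegral_Ioc_genA hβm hσm hβloc hσloc hXjm
    fun t ht => hXlaw t (Ioc_subset_Icc_self ht)
  have hF := integral_sum_setIntegral_univ_prod_eq_sum_integral hΦm measurableSet_Ioc hlam
    (fun i => (hh.measurable_genBFv hφm i).stronglyMeasurable) (hintF h hh)
  have hG := integral_sum_setIntegral_univ_prod_eq_sum_integral hΓm measurableSet_Ioc hmu
    (fun i => (hh.measurable_genBGv hγm i).stronglyMeasurable) (hintG h hh)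
  have hM1 := hint 1 (by norm_num)
  have h1 := hmean_h 1 (by norm_num)
  rw [comp_eq_Mproc_add, integral_add' ((hM1.add hA.1).add hF.1) hG.1,
    integral_add' (hM1.add hA.1) hF.1, integral_add' hM1 hA.1, hM, hA.2, hF.2, hG.2] at h1
  linarith

/-- If `X` is a stationary adapted process with marginal law `ν`, `Φ_i`,
`Γ_i` are random measures with finite expected total mass on `𝕏×𝔽×[0,1]` (resp.
`𝕏×𝔾×[0,1]`), `λ_i`, `μ_i` are the associated expected occupation measures, the relevant
integrands are integrable, and for every test function `h` the process `M^h` is an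
`(ℱ_t)`-martingale, then for every test function `h`:
`∫𝒜h dν + Σ_i ∫ℬ^F_i h dλ_i + Σ_i ∫ℬ^G_i h dμ_i = 0`. -/
theorem stmt0 {d d1 d2 d3 : ℕ} {Ω : Type*} {mΩ : MeasurableSpace Ω}
    (P : Measure Ω) (hP : IsProbabilityMeasure P) (ℱ : Filtration ℝ mΩ)
    (β : Euc d → Euc d) (σ : Euc d → Fin d → Fin d1 → ℝ)
    (φ : Euc d → Fin d → Fin d2 → ℝ) (γ : Euc d → Fin d → Fin d3 → ℝ)
    (hβm : Measurable β) (hσm : Measurable σ) (hφm : Measurable φ) (hγm : Measurable γ)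
    (hβloc : ∀ x : Euc d, ∃ U ∈ 𝓝 x, ∃ C : ℝ, ∀ y ∈ U, ‖β y‖ ≤ C)
    (hσloc : ∀ x : Euc d, ∃ U ∈ 𝓝 x, ∃ C : ℝ, ∀ y ∈ U, ∀ i k, |σ y i k| ≤ C)
    (ν : Measure (Euc d)) (hν : IsProbabilityMeasure ν)
    (X : ℝ → Ω → Euc d)
    (hXjm : Measurable (Function.uncurry X))
    (hXad : ∀ t ∈ Icc (0:ℝ) 1, Measurable[ℱ t] (X t))
    (hXlaw : ∀ t ∈ Icc (0:ℝ) 1, Measure.map (X t) P = ν)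
    (Φ : Fin d2 → Ω → Measure ((Euc d × Cone d2) × ℝ))
    (Γ : Fin d3 → Ω → Measure ((Euc d × Cone d3) × ℝ))
    (hΦm : ∀ i (A : Set ((Euc d × Cone d2) × ℝ)), MeasurableSet A →
      Measurable fun ω => Φ i ω A)
    (hΓm : ∀ i (A : Set ((Euc d × Cone d3) × ℝ)), MeasurableSet A →
      Measurable fun ω => Γ i ω A)
    (hΦfin : ∀ i, ∫⁻ ω, Φ i ω ((univ : Set (Euc d × Cone d2)) ×ˢ Icc (0:ℝ) 1) ∂P ≠ ⊤)
    (hΓfin : ∀ i, ∫⁻ ω, Γ i ω ((univ : Set (Euc d × Cone d3)) ×ˢ Icc (0:ℝ) 1) ∂P ≠ ⊤)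
    (lam : Fin d2 → Measure (Euc d × Cone d2))
    (mu : Fin d3 → Measure (Euc d × Cone d3))
    (hlamfin : ∀ i, IsFiniteMeasure (lam i)) (hmufin : ∀ i, IsFiniteMeasure (mu i))
    (hlam : ∀ i (C : Set (Euc d × Cone d2)), MeasurableSet C →
      lam i C = ∫⁻ ω, Φ i ω (C ×ˢ Ioc (0:ℝ) 1) ∂P)
    (hmu : ∀ i (C : Set (Euc d × Cone d3)), MeasurableSet C →
      mu i C = ∫⁻ ω, Γ i ω (C ×ˢ Ioc (0:ℝ) 1) ∂P)
    (hintF : ∀ h : Euc d → ℝ, TestFun h → ∀ i,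
      Integrable (fun q : Euc d × Cone d2 => genBFv φ h i q.1 q.2) (lam i))
    (hintG : ∀ h : Euc d → ℝ, TestFun h → ∀ i,
      Integrable (fun q : Euc d × Cone d3 => genBGv γ h i q.1 q.2) (mu i))
    (hmart : ∀ h : Euc d → ℝ, TestFun h →
      IsMartingaleOn ℱ P (Mproc β σ φ γ h X Φ Γ)) :
    ∀ h : Euc d → ℝ, TestFun h →
      ∫ x, genA β σ h x ∂ν
        + ∑ i, ∫ q, genBFv φ h i q.1 q.2 ∂(lam i)
        + ∑ i, ∫ q, genBGv γ h i q.1 q.2 ∂(mu i) = 0 :=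
  stmt0_general P hP ℱ β σ φ γ hβm hσm hφm hγm hβloc hσloc ν X hXjm hXlaw Φ Γ hΦm hΓm lam mu hlam
    hmu hintF hintG hmart
end
end

section
/- Let m ≥ 1 be an integer, let γ̄ > 0, and fix an index 1 ≤ i ≤ m. Let g ∈ ℝ^m with g_k ≥ γ̄ for all k, let y ∈ [0,∞)^m with y_i > 0, and let x ∈ ℝ with x ≥ g·y (dot product). Then (2x(g·y) − (g·y)²)/y_i ≥ (1/2)(γ̄·x + γ̄²·Σ_{k=1}^m y_k). -/
open scoped BigOperators

/-- For `g ∈ ℝ^m` with `g_k ≥ γ̄ > 0`, `y ∈ [0,∞)^m` with `y_i > 0`,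
and `x ≥ g·y`, one has
`(2x(g·y) − (g·y)²)/y_i ≥ (1/2)(γ̄·x + γ̄²·Σ_k y_k)`. -/
theorem stmt14 (m : ℕ) (hm : 1 ≤ m) (γbar : ℝ) (hγbar : 0 < γbar) (i : Fin m)
    (g y : Fin m → ℝ) (hg : ∀ k, γbar ≤ g k) (hy : ∀ k, 0 ≤ y k) (hyi : 0 < y i)
    (x : ℝ) (hx : ∑ k, g k * y k ≤ x) :
    (1/2) * (γbar * x + γbar ^ 2 * ∑ k, y k)
      ≤ (2 * x * (∑ k, g k * y k) - (∑ k, g k * y k) ^ 2) / y i := by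
  set s := ∑ k, g k * y k with hs
  have hs0 : 0 ≤ s := Finset.sum_nonneg fun k _ =>
    mul_nonneg (le_trans hγbar.le (hg k)) (hy k)
  have hsγ : γbar * ∑ k, y k ≤ s := by
    rw [Finset.mul_sum]
    exact Finset.sum_le_sum fun k _ => mul_le_mul_of_nonneg_right (hg k) (hy k)
  have hyis : y i ≤ ∑ k, y k :=
    Finset.single_le_sum (fun k _ => hy k) (Finset.mem_univ i)
  have hsyi : γbar * y i ≤ s :=
    le_trans (mul_le_mul_of_nonneg_left hyis hγbar.le) hsγ
  have hx0 : 0 ≤ x := le_trans hs0 hx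
  rw [le_div_iff₀ hyi]
  nlinarith [mul_nonneg (sub_nonneg.mpr hx) hs0, mul_nonneg (sub_nonneg.mpr hsyi) hx0,
    mul_nonneg (sub_nonneg.mpr hsγ) (sub_nonneg.mpr hsyi),
    mul_nonneg (sub_nonneg.mpr hsγ) hs0, mul_nonneg hγbar.le (hy i),
    mul_nonneg (sub_nonneg.mpr hx) (sub_nonneg.mpr hsyi)]
end
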